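/- Let γ be a regular operation on a topological space X and let A be a γ*-semi-closed subset of X. Then sbd_γ*(sbd_γ*(sbd_γ*(A))) = sbd_γ*(sbd_γ*(A)). -/
import Mathlib


open Set

/-- An operation on a topological space: `V ⊆ γ V` for every open `V`. -/
def OperationOn {X : Type*} [TopologicalSpace X] (γ : Set X → Set X) : Prop :=
  ∀ V : Set X, IsOpen V → V ⊆ γ V

/-- The γ-interior of a set. -/
def gInt {X : Type*} [TopologicalSpace X] (γ : Set X → Set X) (A : Set X) : Set X :=
  {x | x ∈ A ∧ ∃ N : Set X, IsOpen N ∧ x ∈ N ∧ γ N ⊆ A}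

/-- A set is γ-open iff it equals its γ-interior. -/
def GOpen {X : Type*} [TopologicalSpace X] (γ : Set X → Set X) (A : Set X) : Prop :=
  A = gInt γ A

/-- A set is γ-closed iff its complement is γ-open. -/
def GClosed {X : Type*} [TopologicalSpace X] (γ : Set X → Set X) (A : Set X) : Prop :=
  GOpen γ Aᶜ

/-- The γ-closure of a set. -/
def gCl {X : Type*} [TopologicalSpace X] (γ : Set X → Set X) (A : Set X) : Set X :=
  {x | ∀ U : Set X, IsOpen U → x ∈ U → (γ U ∩ A).Nonempty}

/-- The γ-boundary of a set. -/
def gBd {X : Type*} [TopologicalSpace X] (γ : Set X → Set X) (A : Set X) : Set X :=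
  gCl γ A ∩ gCl γ Aᶜ

/-- A set is γ*-semi-open iff there is a γ-open `O` with `O ⊆ A ⊆ gCl γ O`. -/
def GSemiOpen {X : Type*} [TopologicalSpace X] (γ : Set X → Set X) (A : Set X) : Prop :=
  ∃ O : Set X, GOpen γ O ∧ O ⊆ A ∧ A ⊆ gCl γ O

/-- A set is γ*-semi-closed iff its complement is γ*-semi-open. -/
def GSemiClosed {X : Type*} [TopologicalSpace X] (γ : Set X → Set X) (A : Set X) : Prop :=
  GSemiOpen γ Aᶜ

/-- The γ*-semi-closure: intersection of all γ*-semi-closed sets containing `A`. -/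
def sCl {X : Type*} [TopologicalSpace X] (γ : Set X → Set X) (A : Set X) : Set X :=
  ⋂₀ {F : Set X | GSemiClosed γ F ∧ A ⊆ F}

/-- The γ*-semi-interior: union of all γ*-semi-open sets contained in `A`. -/
def sInt {X : Type*} [TopologicalSpace X] (γ : Set X → Set X) (A : Set X) : Set X :=
  ⋃₀ {O : Set X | GSemiOpen γ O ∧ O ⊆ A}

/-- The γ*-semi-boundary. -/
def sBd {X : Type*} [TopologicalSpace X] (γ : Set X → Set X) (A : Set X) : Set X :=
  sCl γ A ∩ sCl γ Aᶜ

/-- The γ*-semi-exterior. -/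
def sExt {X : Type*} [TopologicalSpace X] (γ : Set X → Set X) (A : Set X) : Set X :=
  sInt γ Aᶜ

/-- γ is a regular operation. -/
def RegularOp {X : Type*} [TopologicalSpace X] (γ : Set X → Set X) : Prop :=
  ∀ (x : X) (U V : Set X), IsOpen U → IsOpen V → x ∈ U → x ∈ V →
    ∃ W : Set X, IsOpen W ∧ x ∈ W ∧ γ W ⊆ γ U ∩ γ V

/-- γ is an open operation. -/
def OpenOp {X : Type*} [TopologicalSpace X] (γ : Set X → Set X) : Prop :=
  ∀ (x : X) (U : Set X), IsOpen U → x ∈ U →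
    ∃ B : Set X, GOpen γ B ∧ x ∈ B ∧ B ⊆ γ U

/-- A set is semi-open in the sense of Levine. -/
def SemiOpenL {X : Type*} [TopologicalSpace X] (S : Set X) : Prop :=
  ∃ O : Set X, IsOpen O ∧ O ⊆ S ∧ S ⊆ closure O

/-- γ is a semi-regular operation. -/
def SemiRegularOp {X : Type*} [TopologicalSpace X] (γ : Set X → Set X) : Prop :=
  ∀ (x : X) (U V : Set X), SemiOpenL U → SemiOpenL V → x ∈ U → x ∈ V →
    ∃ W : Set X, SemiOpenL W ∧ x ∈ W ∧ γ W ⊆ γ U ∩ γ V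

/-- `f` is γ-semi-continuous: preimages of γ-open sets are γ*-semi-open. -/
def GSemiContinuous {X Y : Type*} [TopologicalSpace X] [TopologicalSpace Y]
    (γX : Set X → Set X) (γY : Set Y → Set Y) (f : X → Y) : Prop :=
  ∀ B : Set Y, GOpen γY B → GSemiOpen γX (f ⁻¹' B)

/-- `f` is γ-semi-open: images of γ-open sets are γ*-semi-open. -/
def GSemiOpenMap {X Y : Type*} [TopologicalSpace X] [TopologicalSpace Y]
    (γX : Set X → Set X) (γY : Set Y → Set Y) (f : X → Y) : Prop :=
  ∀ U : Set X, GOpen γX U → GSemiOpen γY (f '' U)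

lemma gCl_mono' {X : Type*} [TopologicalSpace X] (γ : Set X → Set X) {A B : Set X}
    (h : A ⊆ B) : gCl γ A ⊆ gCl γ B := by
  intro x hx U hU hxU
  obtain ⟨y, hy1, hy2⟩ := hx U hU hxU
  exact ⟨y, hy1, h hy2⟩

lemma gSemiOpen_sUnion' {X : Type*} [TopologicalSpace X] (γ : Set X → Set X)
    {S : Set (Set X)} (h : ∀ s ∈ S, GSemiOpen γ s) : GSemiOpen γ (⋃₀ S) := by
  choose O hO using h
  refine ⟨⋃ s : S, O s s.2, ?_, ?_, ?_⟩
  · apply Set.Subset.antisymm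
    · intro x hx
      obtain ⟨_, ⟨s, rfl⟩, hxs⟩ := hx
      refine ⟨⟨_, ⟨s, rfl⟩, hxs⟩, ?_⟩
      have hxs' : x ∈ gInt γ (O s s.2) := by
        rw [← (hO s s.2).1]; exact hxs
      obtain ⟨_, N, hN, hxN, hsub⟩ := hxs'
      exact ⟨N, hN, hxN, hsub.trans (Set.subset_iUnion (fun t : S => O t t.2) s)⟩
    · intro x hx; exact hx.1
  · intro x hx
    obtain ⟨_, ⟨s, rfl⟩, hxs⟩ := hx
    exact ⟨s, s.2, (hO s s.2).2.1 hxs⟩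
  · intro x hx
    obtain ⟨s, hs, hxs⟩ := hx
    exact gCl_mono' γ (Set.subset_iUnion (fun t : S => O t t.2) ⟨s, hs⟩)
      ((hO s hs).2.2 hxs)

lemma gSemiClosed_sCl' {X : Type*} [TopologicalSpace X] (γ : Set X → Set X) (B : Set X) :
    GSemiClosed γ (sCl γ B) := by
  unfold GSemiClosed sCl
  rw [Set.compl_sInter]
  apply gSemiOpen_sUnion'
  rintro s ⟨F, ⟨hF, _⟩, rfl⟩
  exact hF

lemma subset_sCl' {X : Type*} [TopologicalSpace X] (γ : Set X → Set X) (B : Set X) :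
    B ⊆ sCl γ B := fun x hx => fun F hF => hF.2 hx

lemma sCl_mono' {X : Type*} [TopologicalSpace X] (γ : Set X → Set X) {A B : Set X}
    (h : A ⊆ B) : sCl γ A ⊆ sCl γ B :=
  fun x hx F hF => hx F ⟨hF.1, h.trans hF.2⟩

lemma sCl_of_semiClosed' {X : Type*} [TopologicalSpace X] (γ : Set X → Set X) {B : Set X}
    (h : GSemiClosed γ B) : sCl γ B = B :=
  Set.Subset.antisymm (Set.sInter_subset_of_mem ⟨h, subset_rfl⟩) (subset_sCl' γ B)

lemma gSemiClosed_inter' {X : Type*} [TopologicalSpace X] (γ : Set X → Set X) {A B : Set X}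
    (hA : GSemiClosed γ A) (hB : GSemiClosed γ B) : GSemiClosed γ (A ∩ B) := by
  unfold GSemiClosed
  rw [Set.compl_inter, show Aᶜ ∪ Bᶜ = ⋃₀ {Aᶜ, Bᶜ} by simp [Set.sUnion_pair]]
  apply gSemiOpen_sUnion'
  rintro s hs
  rcases hs with rfl | rfl
  · exact hA
  · exact hB

lemma sBd_sBd_of_semiClosed' {X : Type*} [TopologicalSpace X] (γ : Set X → Set X)
    {C : Set X} (hC : GSemiClosed γ C) : sBd γ (sBd γ C) = sBd γ C := by
  have hD : sBd γ C = C ∩ sCl γ Cᶜ := by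
    unfold sBd; rw [sCl_of_semiClosed' γ hC]
  have hDc : GSemiClosed γ (sBd γ C) := by
    rw [hD]; exact gSemiClosed_inter' γ hC (gSemiClosed_sCl' γ Cᶜ)
  have hsub : sBd γ C ⊆ sCl γ (sBd γ C)ᶜ := by
    intro x hx
    have h1 : x ∈ sCl γ Cᶜ := (hD ▸ hx).2
    have h2 : Cᶜ ⊆ (sBd γ C)ᶜ := Set.compl_subset_compl.mpr (hD ▸ Set.inter_subset_left)
    exact sCl_mono' γ h2 h1
  show sCl γ (sBd γ C) ∩ sCl γ (sBd γ C)ᶜ = sBd γ C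
  rw [sCl_of_semiClosed' γ hDc]
  exact Set.inter_eq_self_of_subset_left hsub

theorem stmt6 {X : Type*} [TopologicalSpace X] (gamma : Set X -> Set X)
    (hop : OperationOn gamma) (hreg : RegularOp gamma) (A : Set X)
    (hA : GSemiClosed gamma A) :
    sBd gamma (sBd gamma (sBd gamma A)) = sBd gamma (sBd gamma A) := by
  have hBd : GSemiClosed gamma (sBd gamma A) := by
    have : sBd gamma A = A ∩ sCl gamma Aᶜ := by
      unfold sBd; rw [sCl_of_semiClosed' gamma hA]
    rw [this]
    exact gSemiClosed_inter' gamma hA (gSemiClosed_sCl' gamma Aᶜ)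
  rw [sBd_sBd_of_semiClosed' gamma hBd]
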